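/- arXiv:1103.1229 — 8 statements merged into one kernel-verified Lean document; each statement's English description precedes it below -/
import Mathlib

section
/- Let u : ℝ³ → ℂ³ be differentiable at a point x ∈ ℝ³ and let n ∈ ℝ³ be any vector. Then σ(u)(x)·n = 2μ (M(n,∂)u)(x) + (λ+2μ)(div u)(x) n − μ n × (curl u)(x), where M(n,∂)u = (n·∇)u − n (div u) + n × curl u is the tangential Günter derivative. -/
noncomputable section

open scoped BigOperators
open Matrix

/-- Partial derivative of a complex-valued function on ℝ³ in the `i`-th coordinate direction. -/
def pd (i : Fin 3) (f : (Fin 3 → ℝ) → ℂ) (x : Fin 3 → ℝ) : ℂ :=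
  fderiv ℝ f x (Pi.single i 1)

/-- Divergence of a vector field `u : ℝ³ → ℂ³`. -/
def vdiv (u : (Fin 3 → ℝ) → Fin 3 → ℂ) (x : Fin 3 → ℝ) : ℂ :=
  ∑ i, pd i (fun y => u y i) x

/-- Gradient matrix `[∇u]`: the `(i,j)` entry is `∂u_j/∂x_i`. -/
def nabla (u : (Fin 3 → ℝ) → Fin 3 → ℂ) (x : Fin 3 → ℝ) : Matrix (Fin 3) (Fin 3) ℂ :=
  Matrix.of fun i j => pd i (fun y => u y j) x

/-- Strain tensor `ε(u) = ½([∇u] + [∇u]ᵀ)`. -/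
def strain (u : (Fin 3 → ℝ) → Fin 3 → ℂ) (x : Fin 3 → ℝ) : Matrix (Fin 3) (Fin 3) ℂ :=
  (2 : ℂ)⁻¹ • (nabla u x + (nabla u x)ᵀ)

/-- Stress tensor `σ(u) = λ (div u) I₃ + 2 μ ε(u)`. -/
def stress (lam mu : ℝ) (u : (Fin 3 → ℝ) → Fin 3 → ℂ) (x : Fin 3 → ℝ) :
    Matrix (Fin 3) (Fin 3) ℂ :=
  ((lam : ℂ) * vdiv u x) • (1 : Matrix (Fin 3) (Fin 3) ℂ) + (2 * (mu : ℂ)) • strain u x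

/-- Componentwise curl of a vector field `u : ℝ³ → ℂ³`. -/
def vcurl (u : (Fin 3 → ℝ) → Fin 3 → ℂ) (x : Fin 3 → ℝ) : Fin 3 → ℂ :=
  ![pd 1 (fun y => u y 2) x - pd 2 (fun y => u y 1) x,
    pd 2 (fun y => u y 0) x - pd 0 (fun y => u y 2) x,
    pd 0 (fun y => u y 1) x - pd 1 (fun y => u y 0) x]

/-- Unconjugated bilinear dot product on `ℂ³`. -/
def cdot (a b : Fin 3 → ℂ) : ℂ := ∑ j, a j * b j

/-- Cross product on `ℂ³`. -/
def cross (a b : Fin 3 → ℂ) : Fin 3 → ℂ :=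
  ![a 1 * b 2 - a 2 * b 1, a 2 * b 0 - a 0 * b 2, a 0 * b 1 - a 1 * b 0]

/-- Double-dot product of matrices: `A : B = ∑ᵢⱼ Aᵢⱼ Bᵢⱼ`. -/
def ddot (A B : Matrix (Fin 3) (Fin 3) ℂ) : ℂ := ∑ i, ∑ j, A i j * B i j

/-- A real vector regarded as a vector in `ℂ³`. -/
def cvec (n : Fin 3 → ℝ) : Fin 3 → ℂ := fun i => (n i : ℂ)

/-- Directional derivative `(n·∇)u`. -/
def dirDeriv (n : Fin 3 → ℝ) (u : (Fin 3 → ℝ) → Fin 3 → ℂ) (x : Fin 3 → ℝ) : Fin 3 → ℂ :=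
  fun j => ∑ i, (n i : ℂ) * pd i (fun y => u y j) x

/-- Laplacian of a scalar function on ℝ³. -/
def lap (f : (Fin 3 → ℝ) → ℂ) (x : Fin 3 → ℝ) : ℂ :=
  ∑ i, pd i (fun y => pd i f y) x

/-- Tangential Günter derivative `M(n,∂)u = (n·∇)u − n (div u) + n × curl u`. -/
def gunter (n : Fin 3 → ℝ) (u : (Fin 3 → ℝ) → Fin 3 → ℂ) (x : Fin 3 → ℝ) : Fin 3 → ℂ :=
  dirDeriv n u x - vdiv u x • cvec n + cross (cvec n) (vcurl u x)

/-- Tangential gradient matrix `[∇_Γ u]`: the `j`-th column is `∇u_j − (n·∇u_j) n`. -/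
def tgrad (n : Fin 3 → ℝ) (u : (Fin 3 → ℝ) → Fin 3 → ℂ) (x : Fin 3 → ℝ) :
    Matrix (Fin 3) (Fin 3) ℂ :=
  Matrix.of fun i j => nabla u x i j - (n i : ℂ) * dirDeriv n u x j

/-- Surface divergence `div_Γ u = div u − n·((n·∇)u)` associated with the direction `n`. -/
def sdiv (n : Fin 3 → ℝ) (u : (Fin 3 → ℝ) → Fin 3 → ℂ) (x : Fin 3 → ℝ) : ℂ :=
  vdiv u x - cdot (cvec n) (dirDeriv n u x)

/-- σ(u)·n = 2μ M(n,∂)u + (λ+2μ)(div u) n − μ n × curl u. -/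
theorem stress_mulVec_eq_gunter_form (lam mu : ℝ) (hlam : 0 < lam) (hmu : 0 < mu)
    (u : (Fin 3 → ℝ) → Fin 3 → ℂ) (x : Fin 3 → ℝ) (hu : DifferentiableAt ℝ u x)
    (n : Fin 3 → ℝ) :
    (stress lam mu u x).mulVec (cvec n) =
      (2 * (mu : ℂ)) • gunter n u x + (((lam : ℂ) + 2 * (mu : ℂ)) * vdiv u x) • cvec n
        - (mu : ℂ) • cross (cvec n) (vcurl u x) := by
  funext i
  simp only [stress, strain, nabla, vdiv, gunter, dirDeriv, cross, vcurl, cvec,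
    Matrix.mulVec, dotProduct, Matrix.add_apply, Matrix.smul_apply,
    Matrix.transpose_apply, Matrix.one_apply, Matrix.of_apply, Pi.add_apply,
    Pi.sub_apply, Pi.smul_apply, smul_eq_mul, Fin.sum_univ_three]
  fin_cases i <;>
    simp [Matrix.cons_val_zero, Matrix.cons_val_one, Matrix.head_cons] <;> ring
end
end

section
/- Let u : ℝ³ → ℂ³ be differentiable at a point x ∈ ℝ³ and let n ∈ ℝ³ be any vector. Then σ(u)(x)·n = μ (((n·∇)u)(x) + (M(n,∂)u)(x)) + (λ+μ)(div u)(x) n, where M(n,∂)u = (n·∇)u − n (div u) + n × curl u is the tangential Günter derivative. -/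
noncomputable section

open scoped BigOperators
open Matrix

/-- σ(u)·n = μ ((n·∇)u + M(n,∂)u) + (λ+μ)(div u) n. -/
theorem stress_mulVec_eq_mixed_form (lam mu : ℝ) (hlam : 0 < lam) (hmu : 0 < mu)
    (u : (Fin 3 → ℝ) → Fin 3 → ℂ) (x : Fin 3 → ℝ) (hu : DifferentiableAt ℝ u x)
    (n : Fin 3 → ℝ) :
    (stress lam mu u x).mulVec (cvec n) =
      (mu : ℂ) • (dirDeriv n u x + gunter n u x)
        + (((lam : ℂ) + (mu : ℂ)) * vdiv u x) • cvec n := by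
  funext i
  fin_cases i <;>
    simp [stress, strain, nabla, vdiv, gunter, dirDeriv, cross, vcurl, cvec, mulVec, dotProduct,
      Fin.sum_univ_three, Matrix.one_apply, Matrix.vecHead, Matrix.vecTail] <;> ring
end
end

section
/- Let u : ℝ³ → ℂ³ be differentiable at a point x ∈ ℝ³ and let n ∈ ℝ³ be any vector. Then σ(u)(x)·n = (λ+2μ)((n·∇)u)(x) − λ (M(n,∂)u)(x) + (λ+μ) n × (curl u)(x), where M(n,∂)u = (n·∇)u − n (div u) + n × curl u is the tangential Günter derivative. -/
noncomputable section

open scoped BigOperators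
open Matrix

/-- σ(u)·n = (λ+2μ)(n·∇)u − λ M(n,∂)u + (λ+μ) n × curl u. -/
theorem stress_mulVec_eq_normal_form (lam mu : ℝ) (hlam : 0 < lam) (hmu : 0 < mu)
    (u : (Fin 3 → ℝ) → Fin 3 → ℂ) (x : Fin 3 → ℝ) (hu : DifferentiableAt ℝ u x)
    (n : Fin 3 → ℝ) :
    (stress lam mu u x).mulVec (cvec n) =
      ((lam : ℂ) + 2 * (mu : ℂ)) • dirDeriv n u x - (lam : ℂ) • gunter n u x
        + ((lam : ℂ) + (mu : ℂ)) • cross (cvec n) (vcurl u x) := by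
  funext j
  fin_cases j <;>
    simp [stress, strain, nabla, Matrix.mulVec, dotProduct, vdiv, vcurl, cross,
      cvec, dirDeriv, gunter, Matrix.one_apply, Matrix.transpose_apply, Fin.sum_univ_three,
      Pi.sub_apply, Pi.add_apply, Pi.smul_apply, smul_eq_mul, Matrix.vecHead, Matrix.vecTail] <;>
    ring
end
end

section
/- Let U ⊆ ℝ³ be open and u : U → ℂ³ a smooth (infinitely differentiable) solution of the Navier equation μΔu + (λ+μ)∇div u + ρω²u = 0 on U. Define the transversal part u_s = u − u_p where u_p = −κ_p^{-2} ∇(div u) and κ_p² = ρω²/(λ+2μ). Then div u_s = 0 on U and u_s satisfies the vector Helmholtz equation Δu_s + κ_s² u_s = 0 on U, where κ_s² = ρω²/μ. -/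
noncomputable section

open scoped BigOperators
open Matrix

abbrev V3 := Fin 3 → ℝ

def Sm (U : Set V3) (f : V3 → ℂ) : Prop := ∀ x ∈ U, ContDiffAt ℝ (⊤ : ℕ∞) f x

lemma Sm.pd' {U : Set V3} {f : V3 → ℂ} (hf : Sm U f) (i : Fin 3) : Sm U (pd i f) := by
  intro x hx
  have h1 : ContDiffAt ℝ (⊤ : ℕ∞) (fderiv ℝ f) x := (hf x hx).fderiv_right (by simp)
  have := ((ContinuousLinearMap.apply ℝ ℂ (Pi.single i (1:ℝ))).contDiff.contDiffAt).comp x h1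
  simp only [Function.comp_def, ContinuousLinearMap.apply_apply] at this; exact this

lemma diffOf {U : Set V3} {f : V3 → ℂ} (hf : Sm U f) {x : V3} (hx : x ∈ U) :
    DifferentiableAt ℝ f x := (hf x hx).differentiableAt (by simp)

lemma Sm.sum' {U : Set V3} {f : Fin 3 → V3 → ℂ} (hf : ∀ j, Sm U (f j)) :
    Sm U (fun y => ∑ j, f j y) := fun x hx => ContDiffAt.sum fun j _ => hf j x hx

lemma pd_congr {U : Set V3} (hU : IsOpen U) {x : V3} (hx : x ∈ U) {f g : V3 → ℂ}
    (h : ∀ y ∈ U, f y = g y) (i : Fin 3) : pd i f x = pd i g x := by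
  unfold pd
  rw [Filter.EventuallyEq.fderiv_eq (Filter.eventuallyEq_of_mem (hU.mem_nhds hx) h)]

lemma pd_sub {f g : V3 → ℂ} {x : V3} (hf : DifferentiableAt ℝ f x)
    (hg : DifferentiableAt ℝ g x) (i : Fin 3) :
    pd i (fun y => f y - g y) x = pd i f x - pd i g x := by
  unfold pd; rw [fderiv_fun_sub hf hg]; simp

lemma pd_const_mul {f : V3 → ℂ} {x : V3} (hf : DifferentiableAt ℝ f x) (c : ℂ) (i : Fin 3) :
    pd i (fun y => c * f y) x = c * pd i f x := by
  unfold pd; rw [fderiv_const_mul hf c]; simp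

lemma pd_sum {x : V3} {f : Fin 3 → V3 → ℂ} (hf : ∀ j, DifferentiableAt ℝ (f j) x) (i : Fin 3) :
    pd i (fun y => ∑ j, f j y) x = ∑ j, pd i (f j) x := by
  unfold pd; rw [fderiv_fun_sum fun j _ => hf j]; simp

lemma pd_lin3 {f g h : V3 → ℂ} {x : V3} (hf : DifferentiableAt ℝ f x)
    (hg : DifferentiableAt ℝ g x) (hh : DifferentiableAt ℝ h x) (a b c : ℂ) (i : Fin 3) :
    pd i (fun y => a * f y + b * g y + c * h y) x
      = a * pd i f x + b * pd i g x + c * pd i h x := by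
  unfold pd
  have H := (((hf.hasFDerivAt.const_mul a).add (hg.hasFDerivAt.const_mul b)).add
    (hh.hasFDerivAt.const_mul c)).fderiv
  rw [show (fun y => a * f y + b * g y + c * h y) = ((fun y => a * f y) + (fun y => b * g y)) + (fun y => c * h y) from rfl, H]; simp

lemma pd_comm {U : Set V3} (hU : IsOpen U) {f : V3 → ℂ} (hf : Sm U f) {x : V3}
    (hx : x ∈ U) (i j : Fin 3) : pd i (pd j f) x = pd j (pd i f) x := by
  have hsymm := (hf x hx).isSymmSndFDerivAt (by rw [minSmoothness_of_isRCLikeNormedField]; exact WithTop.coe_le_coe.mpr le_top)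
  have hd : DifferentiableAt ℝ (fderiv ℝ f) x :=
    ((hf x hx).fderiv_right (m := 1) (WithTop.coe_le_coe.mpr le_top)).differentiableAt one_ne_zero
  have key : ∀ a b : Fin 3, pd a (pd b f) x
      = fderiv ℝ (fderiv ℝ f) x (Pi.single a 1) (Pi.single b 1) := by
    intro a b
    have H := ((ContinuousLinearMap.apply ℝ ℂ (Pi.single b (1:ℝ))).hasFDerivAt.comp x
      hd.hasFDerivAt).fderiv
    have h2 : pd a (pd b f) x = fderiv ℝ
        (⇑(ContinuousLinearMap.apply ℝ ℂ (Pi.single b (1:ℝ))) ∘ fderiv ℝ f) x (Pi.single a 1) := rfl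
    rw [h2, H]; simp
  rw [key i j, key j i, hsymm]

lemma pd_swap3 {U : Set V3} (hU : IsOpen U) {f : V3 → ℂ} (hf : Sm U f) {x : V3}
    (hx : x ∈ U) (i k : Fin 3) :
    pd i (pd k (pd k f)) x = pd k (pd k (pd i f)) x := by
  have h1 : pd i (pd k (pd k f)) x = pd k (pd i (pd k f)) x := pd_comm hU (hf.pd' k) hx i k
  have h2 : pd k (pd i (pd k f)) x = pd k (pd k (pd i f)) x :=
    pd_congr hU hx (fun y hy => pd_comm hU hf hy i k) k
  rw [h1, h2]

/-- the transversal part `u_s = u − u_p` of a smooth solution of the Navier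
equation is divergence-free and satisfies the vector Helmholtz equation with wave number κₛ. -/
theorem transversal_part (lam mu ρ ω κp κs : ℝ) (hlam : 0 < lam) (hmu : 0 < mu)
    (hρ : 0 < ρ) (hω : 0 < ω) (hκp : 0 < κp) (hκs : 0 < κs)
    (hp : κp ^ 2 = ρ * ω ^ 2 / (lam + 2 * mu)) (hs : κs ^ 2 = ρ * ω ^ 2 / mu)
    (U : Set (Fin 3 → ℝ)) (hU : IsOpen U)
    (u : (Fin 3 → ℝ) → Fin 3 → ℂ) (hu : ContDiffOn ℝ (⊤ : ℕ∞) u U)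
    (hnav : ∀ x ∈ U, ∀ j, (mu : ℂ) * lap (fun y => u y j) x
      + ((lam : ℂ) + (mu : ℂ)) * pd j (vdiv u) x + (ρ : ℂ) * (ω : ℂ) ^ 2 * u x j = 0) :
    ∀ x ∈ U,
      vdiv (fun y j => u y j - (-(((κp : ℂ)) ^ 2)⁻¹ * pd j (vdiv u) y)) x = 0
      ∧ ∀ j, lap (fun y => u y j - (-(((κp : ℂ)) ^ 2)⁻¹ * pd j (vdiv u) y)) x
          + ((κs : ℂ)) ^ 2 * (u x j - (-(((κp : ℂ)) ^ 2)⁻¹ * pd j (vdiv u) x)) = 0 := by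
  have hm0 : (mu : ℂ) ≠ 0 := by exact_mod_cast hmu.ne'
  have hl2m : ((lam : ℂ) + 2 * (mu : ℂ)) ≠ 0 := by
    have h1 : (0:ℝ) < lam + 2 * mu := by linarith
    have h2 : ((lam + 2*mu : ℝ) : ℂ) ≠ 0 := by exact_mod_cast h1.ne'
    push_cast at h2; exact h2
  have hp0 : ((κp : ℂ)) ^ 2 ≠ 0 := pow_ne_zero _ (by exact_mod_cast hκp.ne')
  have hpc : ((κp : ℂ)) ^ 2 * ((lam : ℂ) + 2 * (mu : ℂ)) = (ρ : ℂ) * (ω : ℂ) ^ 2 := by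
    have h1 : κp ^ 2 * (lam + 2 * mu) = ρ * ω ^ 2 := by
      rw [hp]; field_simp
    have h2 := congrArg (fun t : ℝ => (t : ℂ)) h1
    push_cast at h2
    linear_combination h2
  have hsc : ((κs : ℂ)) ^ 2 * (mu : ℂ) = (ρ : ℂ) * (ω : ℂ) ^ 2 := by
    have h1 : κs ^ 2 * mu = ρ * ω ^ 2 := by rw [hs]; field_simp
    have h2 := congrArg (fun t : ℝ => (t : ℂ)) h1
    push_cast at h2
    linear_combination h2
  have hinv : ((κp : ℂ)) ^ 2 * (((κp : ℂ)) ^ 2)⁻¹ = 1 := mul_inv_cancel₀ hp0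
  set d := vdiv u with hdDef
  have hSu : ∀ j, Sm U (fun y => u y j) := by
    intro j x hx
    exact (contDiffAt_pi.mp (hu.contDiffAt (hU.mem_nhds hx))) j
  have hSd : Sm U d := Sm.sum' (fun i => (hSu i).pd' i)
  -- Step 2: Δd = -κp² d on U
  have hlapd : ∀ x ∈ U, lap d x = -((κp : ℂ) ^ 2) * d x := by
    intro x hx
    have hexp : ∀ i : Fin 3,
        (mu:ℂ) * pd i (fun y => lap (fun z => u z i) y) x
          + ((lam:ℂ) + (mu:ℂ)) * pd i (pd i d) x
          + (ρ:ℂ) * (ω:ℂ)^2 * pd i (fun y => u y i) x = 0 := by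
      intro i
      have hlapSm : Sm U (fun y => lap (fun z => u z i) y) :=
        Sm.sum' (fun k => ((hSu i).pd' k).pd' k)
      have h0 : pd i (fun y => (mu:ℂ) * lap (fun z => u z i) y
          + ((lam:ℂ) + (mu:ℂ)) * pd i d y + (ρ:ℂ) * (ω:ℂ)^2 * u y i) x = 0 := by
        rw [pd_congr hU hx (fun y hy => hnav y hy i) i]
        simp [pd]
      rw [pd_lin3 (diffOf hlapSm hx) (diffOf (hSd.pd' i) hx) (diffOf (hSu i) hx)] at h0
      exact h0
    have hsum : (mu:ℂ) * (∑ i, pd i (fun y => lap (fun z => u z i) y) x)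
        + ((lam:ℂ) + (mu:ℂ)) * lap d x + (ρ:ℂ) * (ω:ℂ)^2 * d x = 0 := by
      have h0 := Finset.sum_eq_zero (fun i (_ : i ∈ Finset.univ) => hexp i)
      rw [Finset.sum_add_distrib, Finset.sum_add_distrib, ← Finset.mul_sum, ← Finset.mul_sum,
        ← Finset.mul_sum] at h0
      exact h0
    have hswap : (∑ i, pd i (fun y => lap (fun z => u z i) y) x) = flip lap x d := by
      calc (∑ i, pd i (fun y => lap (fun z => u z i) y) x)
          = ∑ i, ∑ k, pd i (pd k (pd k (fun z => u z i))) x := by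
            refine Finset.sum_congr rfl (fun i _ => ?_)
            exact pd_sum (fun k => diffOf (((hSu i).pd' k).pd' k) hx) i
        _ = ∑ i, ∑ k, pd k (pd k (pd i (fun z => u z i))) x := by
            refine Finset.sum_congr rfl (fun i _ => Finset.sum_congr rfl (fun k _ => ?_))
            exact pd_swap3 hU (hSu i) hx i k
        _ = ∑ k, ∑ i, pd k (pd k (pd i (fun z => u z i))) x := Finset.sum_comm
        _ = ∑ k, pd k (pd k d) x := by
            refine Finset.sum_congr rfl (fun k _ => ?_)
            rw [← pd_sum (fun i => diffOf (((hSu i).pd' i).pd' k) hx) k]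
            refine (pd_congr hU hx (fun y hy => ?_) k).symm
            exact pd_sum (fun i => diffOf ((hSu i).pd' i) hy) k
        _ = flip lap x d := rfl
    rw [hswap] at hsum
    have hld : flip lap x d = lap d x := rfl
    rw [hld] at hsum
    have key : ((lam:ℂ) + 2*(mu:ℂ)) * lap d x
        = ((lam:ℂ) + 2*(mu:ℂ)) * (-((κp:ℂ)^2) * d x) := by
      linear_combination hsum + d x * hpc
    exact mul_left_cancel₀ hl2m key
  -- Step 3
  have hstep3 : ∀ x ∈ U, ∀ j : Fin 3,
      (∑ i, pd i (pd i (pd j d)) x) = -((κp : ℂ) ^ 2) * pd j d x := by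
    intro x hx j
    have h1 : (∑ i, pd i (pd i (pd j d)) x) = ∑ i, pd j (pd i (pd i d)) x :=
      Finset.sum_congr rfl (fun i _ => (pd_swap3 hU hSd hx j i).symm)
    have e2 : pd j (lap d) x = -((κp:ℂ)^2) * pd j d x := by
      rw [pd_congr hU hx (fun y hy => hlapd y hy) j]
      exact pd_const_mul (diffOf hSd hx) _ j
    have e3 : pd j (lap d) x = ∑ i, pd j (pd i (pd i d)) x :=
      pd_sum (fun i => diffOf ((hSd.pd' i).pd' i) hx) j
    rw [h1, ← e3]
    exact e2
  intro x hx
  constructor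
  · show (∑ j, pd j (fun y => u y j - (-(((κp : ℂ)) ^ 2)⁻¹ * pd j d y)) x) = 0
    have e : ∀ j : Fin 3, pd j (fun y => u y j - (-(((κp : ℂ)) ^ 2)⁻¹ * pd j d y)) x
        = pd j (fun y => u y j) x - (-(((κp : ℂ)) ^ 2)⁻¹) * pd j (pd j d) x := by
      intro j
      rw [pd_sub (diffOf (hSu j) hx) ((diffOf (hSd.pd' j) hx).const_mul _),
        pd_const_mul (diffOf (hSd.pd' j) hx)]
    rw [Finset.sum_congr rfl (fun j _ => e j), Finset.sum_sub_distrib, ← Finset.mul_sum]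
    have h2 : (∑ j, pd j (fun y => u y j) x) = d x := rfl
    have h3 : (∑ j, pd j (pd j d) x) = lap d x := rfl
    rw [h2, h3, hlapd x hx]
    linear_combination (-(d x)) * hinv
  · intro j
    have husi : ∀ i : Fin 3,
        pd i (pd i (fun y => u y j - (-(((κp : ℂ)) ^ 2)⁻¹ * pd j d y))) x
          = pd i (pd i (fun y => u y j)) x
            - (-(((κp : ℂ)) ^ 2)⁻¹) * pd i (pd i (pd j d)) x := by
      intro i
      have hcg : ∀ y ∈ U, pd i (fun z => u z j - (-(((κp : ℂ)) ^ 2)⁻¹ * pd j d z)) y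
          = pd i (fun z => u z j) y - (-(((κp : ℂ)) ^ 2)⁻¹) * pd i (pd j d) y := by
        intro y hy
        rw [pd_sub (diffOf (hSu j) hy) ((diffOf (hSd.pd' j) hy).const_mul _),
          pd_const_mul (diffOf (hSd.pd' j) hy)]
      rw [pd_congr hU hx hcg i,
        pd_sub (diffOf ((hSu j).pd' i) hx) ((diffOf ((hSd.pd' j).pd' i) hx).const_mul _),
        pd_const_mul (diffOf ((hSd.pd' j).pd' i) hx)]
    have hlapus : lap (fun y => u y j - (-(((κp : ℂ)) ^ 2)⁻¹ * pd j d y)) x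
        = lap (fun y => u y j) x
          - (-(((κp : ℂ)) ^ 2)⁻¹) * (-((κp : ℂ) ^ 2) * pd j d x) := by
      show (∑ i, pd i (pd i (fun y => u y j - (-(((κp : ℂ)) ^ 2)⁻¹ * pd j d y))) x) = _
      rw [Finset.sum_congr rfl (fun i _ => husi i), Finset.sum_sub_distrib, ← Finset.mul_sum,
        hstep3 x hx j]
      rfl
    rw [hlapus]
    have E1 := hnav x hx j
    have key : (mu:ℂ) * ((lap (fun y => u y j) x
        - (-(((κp : ℂ)) ^ 2)⁻¹) * (-((κp : ℂ) ^ 2) * pd j d x))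
        + ((κs : ℂ)) ^ 2 * (u x j - (-(((κp : ℂ)) ^ 2)⁻¹ * pd j d x))) = 0 := by
      linear_combination E1 + u x j * hsc + (((κp:ℂ)^2)⁻¹ * pd j d x) * hsc
        + (((lam:ℂ) + (mu:ℂ)) * pd j d x) * hinv - (((κp:ℂ)^2)⁻¹ * pd j d x) * hpc
    exact (mul_eq_zero.mp key).resolve_left hm0
end
end

section
/- Let w : ℝ³ → ℂ³ be differentiable at a point x ∈ ℝ³ and let n ∈ ℝ³ be a unit vector. If the tangential Günter derivative vanishes at x, i.e. (M(n,∂)w)(x) = ((n·∇)w)(x) − n (div w)(x) + n × (curl w)(x) = 0, then the tangential part of the traction satisfies (n × (σ(w)(x)·n)) × n = μ (n × ((n·∇)w)(x)) × n. -/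
noncomputable section

open scoped BigOperators
open Matrix

set_option maxHeartbeats 1000000 in
lemma cross_aux (c d : ℂ) (a v : Fin 3 → ℂ) :
    cross a (c • a + d • v) = d • cross a v := by
  funext k
  fin_cases k <;>
  · simp [cross, Pi.add_apply, Pi.smul_apply, smul_eq_mul]
    ring

set_option maxHeartbeats 1000000 in
lemma cross_smul_left (c : ℂ) (a b : Fin 3 → ℂ) :
    cross (c • a) b = c • cross a b := by
  funext k
  fin_cases k <;>
  · simp [cross, Pi.smul_apply, smul_eq_mul]
    ring

/-- if the tangential Günter derivative vanishes, then
`(n × (σ(w)·n)) × n = μ (n × ((n·∇)w)) × n`. -/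
theorem traction_tangential_of_gunter_zero (lam mu : ℝ) (hlam : 0 < lam) (hmu : 0 < mu)
    (w : (Fin 3 → ℝ) → Fin 3 → ℂ) (x : Fin 3 → ℝ) (hw : DifferentiableAt ℝ w x)
    (n : Fin 3 → ℝ) (hn : ∑ i, n i ^ 2 = 1)
    (hM : gunter n w x = 0) :
    cross (cross (cvec n) ((stress lam mu w x).mulVec (cvec n))) (cvec n) =
      (mu : ℂ) • cross (cross (cvec n) (dirDeriv n w x)) (cvec n) := by
  have h0 := congrFun hM 0
  have h1 := congrFun hM 1
  have h2 := congrFun hM 2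
  simp only [gunter, dirDeriv, vdiv, cross, vcurl, cvec, Pi.sub_apply, Pi.add_apply,
    Pi.smul_apply, smul_eq_mul, Fin.sum_univ_three, Matrix.cons_val_zero, Matrix.cons_val_one,
    Matrix.head_cons, Matrix.cons_val_two, Matrix.tail_cons, Pi.zero_apply] at h0 h1 h2
  have hσ : (stress lam mu w x).mulVec (cvec n) =
      (((lam : ℂ) + mu) * vdiv w x) • cvec n + (mu : ℂ) • dirDeriv n w x := by
    funext j
    fin_cases j <;>
    · simp only [show ((⟨0, by omega⟩ : Fin 3)) = 0 from rfl,
        show ((⟨1, by omega⟩ : Fin 3)) = 1 from rfl,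
        show ((⟨2, by omega⟩ : Fin 3)) = 2 from rfl]
      simp only [stress, strain, nabla, Matrix.mulVec, dotProduct, vdiv, dirDeriv,
        cvec, Matrix.add_apply, Matrix.smul_apply, Matrix.one_apply, Matrix.transpose_apply,
        Matrix.of_apply, Fin.sum_univ_three, smul_eq_mul, Pi.add_apply, Pi.smul_apply,
        Fin.isValue]
      norm_num [Fin.ext_iff]
      first
        | linear_combination (mu : ℂ) * h0
        | linear_combination (mu : ℂ) * h1
        | linear_combination (mu : ℂ) * h2
  rw [hσ, cross_aux, cross_smul_left]
end
end

section
/- Let w : ℝ³ → ℂ³ be differentiable at a point x ∈ ℝ³ and let n ∈ ℝ³ be a unit vector. If the tangential Günter derivative vanishes at x, i.e. (M(n,∂)w)(x) = ((n·∇)w)(x) − n (div w)(x) + n × (curl w)(x) = 0, then the normal part of the traction satisfies n·(σ(w)(x)·n) = (λ+2μ) ( n·((n·∇)w)(x) ), where a·b = Σ_j a_j b_j is the unconjugated bilinear dot product. -/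
noncomputable section

open scoped BigOperators
open Matrix

/-- if the tangential Günter derivative vanishes, then
`n·(σ(w)·n) = (λ+2μ)(n·((n·∇)w))`. -/
theorem traction_normal_of_gunter_zero (lam mu : ℝ) (hlam : 0 < lam) (hmu : 0 < mu)
    (w : (Fin 3 → ℝ) → Fin 3 → ℂ) (x : Fin 3 → ℝ) (hw : DifferentiableAt ℝ w x)
    (n : Fin 3 → ℝ) (hn : ∑ i, n i ^ 2 = 1)
    (hM : gunter n w x = 0) :
    cdot (cvec n) ((stress lam mu w x).mulVec (cvec n)) =
      ((lam : ℂ) + 2 * (mu : ℂ)) * cdot (cvec n) (dirDeriv n w x) := by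
  have e0 := congrFun hM 0
  have e1 := congrFun hM 1
  have e2 := congrFun hM 2
  simp only [gunter, dirDeriv, vdiv, cross, vcurl, cvec, Pi.sub_apply, Pi.add_apply,
    Pi.smul_apply, smul_eq_mul, Pi.zero_apply, Fin.sum_univ_three, Matrix.cons_val_zero,
    Matrix.cons_val_one, Matrix.head_cons, Matrix.cons_val_two, Matrix.tail_cons] at e0 e1 e2
  have hn2 : ((n 0 : ℂ))^2 + (n 1 : ℂ)^2 + (n 2 : ℂ)^2 = 1 := by
    have h := hn
    rw [Fin.sum_univ_three] at h
    exact_mod_cast h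
  simp only [cdot, stress, strain, nabla, vdiv, dirDeriv, cvec, Matrix.mulVec,
    Matrix.add_apply, Matrix.smul_apply, Matrix.one_apply, Matrix.transpose_apply,
    Matrix.of_apply, dotProduct, Fin.sum_univ_three, smul_eq_mul, Fin.isValue,
    if_true, mul_ite, mul_one, mul_zero, Fin.reduceEq, reduceIte]
  norm_num
  linear_combination (-(lam : ℂ) * (n 0)) * e0 + (-(lam : ℂ) * (n 1)) * e1 +
    (-(lam : ℂ) * (n 2)) * e2
end
end

section
/- Let w : ℝ³ → ℂ³ be differentiable at a point x ∈ ℝ³, let n ∈ ℝ³ be a unit vector, and let α ≥ 0, ω > 0, ρ > 0. If w satisfies the impedance condition σ(w)(x)·n + iαω√ρ w(x) = 0 at x, then (div w)(x) = (2μ/(λ+2μ)) (div_Γ w)(x) − i (αω√ρ/(λ+2μ)) ( n·w(x) ), where div_Γ w = div w − n·((n·∇)w) is the surface divergence associated with n. -/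
noncomputable section

open scoped BigOperators
open Matrix

/-- under the impedance condition `σ(w)·n + iαω√ρ w = 0`,
`div w = (2μ/(λ+2μ)) div_Γ w − i(αω√ρ/(λ+2μ)) (n·w)`. -/
theorem div_of_impedance (lam mu ρ ω α : ℝ) (hlam : 0 < lam) (hmu : 0 < mu)
    (hρ : 0 < ρ) (hω : 0 < ω) (hα : 0 ≤ α)
    (w : (Fin 3 → ℝ) → Fin 3 → ℂ) (x : Fin 3 → ℝ) (hw : DifferentiableAt ℝ w x)
    (n : Fin 3 → ℝ) (hn : ∑ i, n i ^ 2 = 1)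
    (himp : (stress lam mu w x).mulVec (cvec n)
      + (Complex.I * (α : ℂ) * (ω : ℂ) * (Real.sqrt ρ : ℂ)) • w x = 0) :
    vdiv w x = 2 * (mu : ℂ) / ((lam : ℂ) + 2 * (mu : ℂ)) * sdiv n w x
      - Complex.I * ((α : ℂ) * (ω : ℂ) * (Real.sqrt ρ : ℂ) / ((lam : ℂ) + 2 * (mu : ℂ)))
          * cdot (cvec n) (w x) := by
  have h0 := congrFun himp 0
  have h1 := congrFun himp 1
  have h2 := congrFun himp 2
  have hne : (lam : ℂ) + 2 * (mu : ℂ) ≠ 0 := by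
    intro h
    have : lam + 2 * mu = 0 := by exact_mod_cast congrArg Complex.re h
    nlinarith
  have hn' : ((n 0 : ℂ))^2 + (n 1 : ℂ)^2 + (n 2 : ℂ)^2 = 1 := by
    have := hn
    rw [Fin.sum_univ_three] at this
    exact_mod_cast this
  simp only [stress, strain, nabla, vdiv, sdiv, dirDeriv, cdot, cvec, Matrix.mulVec,
    dotProduct, Matrix.add_apply, Matrix.smul_apply, Matrix.one_apply,
    Matrix.transpose_apply, Matrix.of_apply, Pi.add_apply, Pi.smul_apply, Pi.zero_apply,
    Fin.sum_univ_three, smul_eq_mul, Fin.isValue] at h0 h1 h2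
  simp only [Fin.reduceEq, reduceIte] at h0 h1 h2
  norm_num at h0 h1 h2
  have key : ((lam:ℂ) + 2*(mu:ℂ)) * vdiv w x
      = 2*(mu:ℂ) * sdiv n w x
        - Complex.I * ((α:ℂ)*(ω:ℂ)*(Real.sqrt ρ:ℂ)) * cdot (cvec n) (w x) := by
    simp only [vdiv, sdiv, dirDeriv, cdot, cvec, Fin.sum_univ_three]
    linear_combination (n 0 : ℂ) * h0 + (n 1 : ℂ) * h1 + (n 2 : ℂ) * h2
      - (lam : ℂ) * (pd 0 (fun y => w y 0) x + pd 1 (fun y => w y 1) x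
          + pd 2 (fun y => w y 2) x) * hn'
  field_simp
  linear_combination key
end
end

section
/- Let w : ℝ³ → ℂ³ be differentiable at a point x ∈ ℝ³, let n ∈ ℝ³ be a unit vector, and let α ≥ 0, ω > 0, ρ > 0. If w satisfies the impedance condition σ(w)(x)·n + iαω√ρ w(x) = 0 at x, then the tangential part of the normal derivative satisfies (n × ((n·∇)w)(x)) × n = −[∇_Γ w](x)·n − i (αω√ρ/μ) (n × w(x)) × n, where ∇_Γ w_j = ∇w_j − (n·∇w_j)n is the tangential gradient of the component w_j and [∇_Γ w] is the 3×3 matrix whose j-th column is ∇_Γ w_j. -/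
set_option maxHeartbeats 1000000
noncomputable section

open scoped BigOperators
open Matrix

/-- under the impedance condition `σ(w)·n + iαω√ρ w = 0`,
`(n × ((n·∇)w)) × n = −[∇_Γ w]·n − i(αω√ρ/μ)(n × w) × n`. -/
theorem normalDeriv_tangential_of_impedance (lam mu ρ ω α : ℝ) (hlam : 0 < lam) (hmu : 0 < mu)
    (hρ : 0 < ρ) (hω : 0 < ω) (hα : 0 ≤ α)
    (w : (Fin 3 → ℝ) → Fin 3 → ℂ) (x : Fin 3 → ℝ) (hw : DifferentiableAt ℝ w x)
    (n : Fin 3 → ℝ) (hn : ∑ i, n i ^ 2 = 1)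
    (himp : (stress lam mu w x).mulVec (cvec n)
      + (Complex.I * (α : ℂ) * (ω : ℂ) * (Real.sqrt ρ : ℂ)) • w x = 0) :
    cross (cross (cvec n) (dirDeriv n w x)) (cvec n) =
      -(tgrad n w x).mulVec (cvec n)
      - (Complex.I * ((α : ℂ) * (ω : ℂ) * (Real.sqrt ρ : ℂ) / (mu : ℂ)))
          • cross (cross (cvec n) (w x)) (cvec n) := by

  have hμ : (mu : ℂ) ≠ 0 := by exact_mod_cast hmu.ne'
  have hinv : (mu : ℂ) * (mu : ℂ)⁻¹ = 1 := mul_inv_cancel₀ hμ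
  have hn' : ((n 0 : ℂ)) ^ 2 + (n 1 : ℂ) ^ 2 + (n 2 : ℂ) ^ 2 = 1 := by
    have h := hn
    rw [Fin.sum_univ_three] at h
    exact_mod_cast h
  have h0 := congrFun himp 0
  have h1 := congrFun himp 1
  have h2 := congrFun himp 2
  simp only [stress, strain, nabla, vdiv, dirDeriv, cvec, Matrix.mulVec, dotProduct,
    Matrix.add_apply, Matrix.smul_apply, Matrix.transpose_apply, Matrix.one_apply, Matrix.of_apply,
    Fin.sum_univ_three, Pi.add_apply, Pi.smul_apply, Pi.zero_apply, smul_eq_mul,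
    Fin.isValue] at h0 h1 h2
  simp only [Fin.reduceEq, if_false, if_true, reduceIte] at h0 h1 h2
  norm_num at h0 h1 h2
  set g00 := pd 0 (fun y => w y 0) x with hg00
  set g01 := pd 0 (fun y => w y 1) x with hg01
  set g02 := pd 0 (fun y => w y 2) x with hg02
  set g10 := pd 1 (fun y => w y 0) x with hg10
  set g11 := pd 1 (fun y => w y 1) x with hg11
  set g12 := pd 1 (fun y => w y 2) x with hg12
  set g20 := pd 2 (fun y => w y 0) x with hg20
  set g21 := pd 2 (fun y => w y 1) x with hg21
  set g22 := pd 2 (fun y => w y 2) x with hg22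
  set u0 : ℂ := (n 0 : ℂ) with hu0
  set u1 : ℂ := (n 1 : ℂ) with hu1
  set u2 : ℂ := (n 2 : ℂ) with hu2
  set w0 := w x 0 with hw0
  set w1 := w x 1 with hw1
  set w2 := w x 2 with hw2
  set a : ℂ := (α : ℂ) * (ω : ℂ) * (Real.sqrt ρ : ℂ) with ha
  set P : ℂ := (mu : ℂ)⁻¹ with hP
  set d : ℂ := g00 + g11 + g22 with hd
  set D0 : ℂ := u0 * g00 + u1 * g10 + u2 * g20 with hD0
  set D1 : ℂ := u0 * g01 + u1 * g11 + u2 * g21 with hD1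
  set D2 : ℂ := u0 * g02 + u1 * g12 + u2 * g22 with hD2
  set ND : ℂ := u0 * D0 + u1 * D1 + u2 * D2 with hND
  set NW : ℂ := u0 * w0 + u1 * w1 + u2 * w2 with hNW
  funext i
  fin_cases i <;>
    [ (refine mul_left_cancel₀ hμ ?_);
      (refine mul_left_cancel₀ hμ ?_);
      (refine mul_left_cancel₀ hμ ?_)]
  · simp only [cross, dirDeriv, tgrad, nabla, cvec, Matrix.mulVec, dotProduct,
      Matrix.of_apply, Fin.sum_univ_three, Pi.neg_apply, Pi.sub_apply, Pi.smul_apply,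
      smul_eq_mul, Matrix.cons_val_zero, Matrix.cons_val_one, Matrix.head_cons,
      Matrix.cons_val_two, Matrix.tail_cons, Fin.isValue, Fin.zero_eta, Fin.mk_one,
      ← hg00, ← hg01, ← hg02, ← hg10, ← hg11, ← hg12, ← hg20, ← hg21, ← hg22,
      ← hu0, ← hu1, ← hu2, ← hw0, ← hw1, ← hw2]
    linear_combination h0 - u0 * (u0 * h0 + u1 * h1 + u2 * h2)
      + ((mu : ℂ) * D0 + (mu : ℂ) * Complex.I * a * P * w0 + (lam : ℂ) * d * u0) * hn'
      + (Complex.I * a * w0 - Complex.I * a * NW * u0) * hinv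
  · simp only [cross, dirDeriv, tgrad, nabla, cvec, Matrix.mulVec, dotProduct,
      Matrix.of_apply, Fin.sum_univ_three, Pi.neg_apply, Pi.sub_apply, Pi.smul_apply,
      smul_eq_mul, Matrix.cons_val_zero, Matrix.cons_val_one, Matrix.head_cons,
      Matrix.cons_val_two, Matrix.tail_cons, Fin.isValue, Fin.zero_eta, Fin.mk_one,
      ← hg00, ← hg01, ← hg02, ← hg10, ← hg11, ← hg12, ← hg20, ← hg21, ← hg22,
      ← hu0, ← hu1, ← hu2, ← hw0, ← hw1, ← hw2]
    linear_combination h1 - u1 * (u0 * h0 + u1 * h1 + u2 * h2)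
      + ((mu : ℂ) * D1 + (mu : ℂ) * Complex.I * a * P * w1 + (lam : ℂ) * d * u1) * hn'
      + (Complex.I * a * w1 - Complex.I * a * NW * u1) * hinv
  · simp only [cross, dirDeriv, tgrad, nabla, cvec, Matrix.mulVec, dotProduct,
      Matrix.of_apply, Fin.sum_univ_three, Pi.neg_apply, Pi.sub_apply, Pi.smul_apply,
      smul_eq_mul, Matrix.cons_val_zero, Matrix.cons_val_one, Matrix.head_cons,
      Matrix.cons_val_two, Matrix.tail_cons, Fin.isValue, Fin.zero_eta, Fin.mk_one,
      Fin.reduceFinMk,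
      ← hg00, ← hg01, ← hg02, ← hg10, ← hg11, ← hg12, ← hg20, ← hg21, ← hg22,
      ← hu0, ← hu1, ← hu2, ← hw0, ← hw1, ← hw2]
    linear_combination h2 - u2 * (u0 * h0 + u1 * h1 + u2 * h2)
      + ((mu : ℂ) * D2 + (mu : ℂ) * Complex.I * a * P * w2 + (lam : ℂ) * d * u2) * hn'
      + (Complex.I * a * w2 - Complex.I * a * NW * u2) * hinv
end
end
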